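/- arXiv:0909.4291 — 5 statements merged into one kernel-verified Lean document; each statement's English description precedes it below -/
import Mathlib

section
/- Let C be a nonempty closed convex subset of a Hilbert space H, let P_C be the metric projection onto C, and let A : C → H be relaxed (γ, r)-cocoercive and μ-Lipschitz with μ > 0 and r > γμ². Then for 0 < s < 2(r − γμ²)/μ², the map x ↦ P_C(x − sAx) is a contraction from C to C. -/
/-!
The metric projection onto a convex set is characterised by the variational inequality
`⟪u - P u, w - P u⟫ ≤ 0` for `w ∈ C`, which makes it firmly nonexpansive, hence nonexpansive.
The forward step `x ↦ x - s • A x` is a contraction: expanding the square and using relaxed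
cocoercivity and the Lipschitz bound gives the factor `1 - 2s(r - γμ²) + s²μ² < 1`.
-/

open RealInnerProductSpace

def IsMetricProjection {H : Type*} [NormedAddCommGroup H] (C : Set H) (P : H → H) : Prop :=
  ∀ x, P x ∈ C ∧ ∀ y ∈ C, ‖x - P x‖ ≤ ‖x - y‖

namespace IsMetricProjection

variable {H : Type*} [NormedAddCommGroup H] [InnerProductSpace ℝ H] {C : Set H} {P : H → H}

theorem inner_sub_nonpos (hP : IsMetricProjection C P) (hC : Convex ℝ C) (u : H) :
    ∀ w ∈ C, ⟪u - P u, w - P u⟫ ≤ 0 := by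
  have : Nonempty C := ⟨⟨P u, (hP u).1⟩⟩
  refine (norm_eq_iInf_iff_real_inner_le_zero hC (hP u).1).1 <| le_antisymm
    (le_ciInf fun w => (hP u).2 w w.2)
    (ciInf_le (f := fun w : C => ‖u - w‖) ⟨0, Set.forall_mem_range.2 fun _ => norm_nonneg _⟩
      ⟨P u, (hP u).1⟩)

theorem norm_sub_sq_le_inner (hP : IsMetricProjection C P) (hC : Convex ℝ C) (u v : H) :
    ‖P u - P v‖ ^ 2 ≤ ⟪u - v, P u - P v⟫ := by
  have hu := hP.inner_sub_nonpos hC u (P v) (hP v).1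
  have hv := hP.inner_sub_nonpos hC v (P u) (hP u).1
  have : ⟪u - v, P u - P v⟫ = ‖P u - P v‖ ^ 2 - ⟪u - P u, P v - P u⟫ - ⟪v - P v, P u - P v⟫ := by
    rw [← real_inner_self_eq_norm_sq]
    simp only [inner_sub_left, inner_sub_right]
    ring
  linarith

theorem norm_sub_le (hP : IsMetricProjection C P) (hC : Convex ℝ C) (u v : H) :
    ‖P u - P v‖ ≤ ‖u - v‖ := by
  have h := (hP.norm_sub_sq_le_inner hC u v).trans (real_inner_le_norm _ _)
  rw [sq, mul_comm] at h
  rcases (norm_nonneg (P u - P v)).eq_or_lt with h0 | h0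
  · rw [← h0]; exact norm_nonneg _
  · exact le_of_mul_le_mul_right h h0

end IsMetricProjection

theorem le_sqrt_mul_of_sq_le_mul_sq {a b θ : ℝ} (hb : 0 ≤ b) (h : a ^ 2 ≤ θ * b ^ 2) :
    a ≤ √θ * b := by
  rw [← Real.sqrt_sq hb, ← Real.sqrt_mul' θ (sq_nonneg b)]
  exact Real.le_sqrt_of_sq_le h

theorem norm_sub_smul_sub_sq_le {H : Type*} [NormedAddCommGroup H] [InnerProductSpace ℝ H]
    {A : H → H} {γ r μ s : ℝ} (hγ : 0 ≤ γ) (hs : 0 ≤ s) {x y : H}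
    (hcoco : ⟪A x - A y, x - y⟫ ≥ -γ * ‖A x - A y‖ ^ 2 + r * ‖x - y‖ ^ 2)
    (hlip : ‖A x - A y‖ ≤ μ * ‖x - y‖) :
    ‖(x - s • A x) - (y - s • A y)‖ ^ 2 ≤
      (1 - 2 * s * (r - γ * μ ^ 2) + s ^ 2 * μ ^ 2) * ‖x - y‖ ^ 2 := by
  have hsq : ‖A x - A y‖ ^ 2 ≤ μ ^ 2 * ‖x - y‖ ^ 2 := by
    rw [← mul_pow]; exact pow_le_pow_left₀ (norm_nonneg _) hlip 2
  have hexp : ‖(x - s • A x) - (y - s • A y)‖ ^ 2 =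
      ‖x - y‖ ^ 2 - 2 * s * ⟪A x - A y, x - y⟫ + s ^ 2 * ‖A x - A y‖ ^ 2 := by
    rw [show (x - s • A x) - (y - s • A y) = (x - y) - s • (A x - A y) by
      rw [smul_sub]; abel, norm_sub_sq_real, norm_smul, real_inner_smul_right, real_inner_comm,
      mul_pow, Real.norm_eq_abs, sq_abs]
    ring
  rw [hexp]
  nlinarith [mul_le_mul_of_nonneg_left hsq (by positivity : 0 ≤ 2 * s * γ + s ^ 2)]

theorem forward_step_factor_lt_one {γ r μ s : ℝ} (hμ : 0 < μ) (hs0 : 0 < s)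
    (hs1 : s < 2 * (r - γ * μ ^ 2) / μ ^ 2) :
    1 - 2 * s * (r - γ * μ ^ 2) + s ^ 2 * μ ^ 2 < 1 := by
  have : s * μ ^ 2 < 2 * (r - γ * μ ^ 2) := (lt_div_iff₀ (by positivity)).1 hs1
  nlinarith

theorem stmt_3_general {H : Type*} [NormedAddCommGroup H] [InnerProductSpace ℝ H]
    (C : Set H) (hCconv : Convex ℝ C)
    (P : H → H) (hP : ∀ x : H, P x ∈ C ∧ ∀ y ∈ C, ‖x - P x‖ ≤ ‖x - y‖)
    (A : H → H) (γ r μ : ℝ)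
    (hγ : 0 < γ) (hμ : 0 < μ)
    (hcoco : ∀ x ∈ C, ∀ y ∈ C, ⟪A x - A y, x - y⟫ ≥ -γ * ‖A x - A y‖ ^ 2 + r * ‖x - y‖ ^ 2)
    (hlip : ∀ x ∈ C, ∀ y ∈ C, ‖A x - A y‖ ≤ μ * ‖x - y‖)
    (s : ℝ) (hs0 : 0 < s) (hs1 : s < 2 * (r - γ * μ ^ 2) / μ ^ 2) :
    (∀ x ∈ C, P (x - s • A x) ∈ C) ∧
      ∃ k : ℝ, 0 ≤ k ∧ k < 1 ∧
        ∀ x ∈ C, ∀ y ∈ C, ‖P (x - s • A x) - P (y - s • A y)‖ ≤ k * ‖x - y‖ := by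
  set θ := 1 - 2 * s * (r - γ * μ ^ 2) + s ^ 2 * μ ^ 2
  have hθ : θ < 1 := forward_step_factor_lt_one hμ hs0 hs1
  refine ⟨fun x _ => (hP _).1, √θ, Real.sqrt_nonneg θ, (Real.sqrt_lt' one_pos).2 (by simpa), ?_⟩
  intro x hx y hy
  calc ‖P (x - s • A x) - P (y - s • A y)‖ ≤ ‖(x - s • A x) - (y - s • A y)‖ :=
        IsMetricProjection.norm_sub_le hP hCconv _ _
    _ ≤ √θ * ‖x - y‖ := le_sqrt_mul_of_sq_le_mul_sq (norm_nonneg _)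
        (norm_sub_smul_sub_sq_le hγ.le hs0.le (hcoco x hx y hy) (hlip x hx y hy))

theorem stmt_3 {H : Type*} [NormedAddCommGroup H] [InnerProductSpace ℝ H]
    (C : Set H) (hC : C.Nonempty) (hCc : IsClosed C) (hCconv : Convex ℝ C)
    (P : H → H) (hP : ∀ x : H, P x ∈ C ∧ ∀ y ∈ C, ‖x - P x‖ ≤ ‖x - y‖)
    (A : H → H) (γ r μ : ℝ)
    (hγ : 0 < γ) (hr : 0 < r) (hμ : 0 < μ) (hrγμ : r > γ * μ ^ 2)
    (hcoco : ∀ x ∈ C, ∀ y ∈ C, ⟪A x - A y, x - y⟫ ≥ -γ * ‖A x - A y‖ ^ 2 + r * ‖x - y‖ ^ 2)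
    (hlip : ∀ x ∈ C, ∀ y ∈ C, ‖A x - A y‖ ≤ μ * ‖x - y‖)
    (s : ℝ) (hs0 : 0 < s) (hs1 : s < 2 * (r - γ * μ ^ 2) / μ ^ 2) :
    (∀ x ∈ C, P (x - s • A x) ∈ C) ∧
      ∃ k : ℝ, 0 ≤ k ∧ k < 1 ∧
        ∀ x ∈ C, ∀ y ∈ C, ‖P (x - s • A x) - P (y - s • A y)‖ ≤ k * ‖x - y‖ :=
  stmt_3_general C hCconv P hP A γ r μ hγ hμ hcoco hlip s hs0 hs1
end

section
/- Let C be a nonempty closed convex subset of a Hilbert space H and A : C → H relaxed (γ, r)-cocoercive and μ-Lipschitz with μ > 0 and r > γμ². Then there exists a unique u ∈ C such that ⟨Au, v − u⟩ ≥ 0 for all v ∈ C (i.e., the variational inequality VI(C, A) has exactly one solution). -/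
open RealInnerProductSpace

theorem stmt_4 {H : Type*} [NormedAddCommGroup H] [InnerProductSpace ℝ H] [CompleteSpace H]
    (C : Set H) (hC : C.Nonempty) (hCc : IsClosed C) (hCconv : Convex ℝ C)
    (A : H → H) (γ r μ : ℝ)
    (hγ : 0 < γ) (hr : 0 < r) (hμ : 0 < μ) (hrγμ : r > γ * μ ^ 2)
    (hcoco : ∀ x ∈ C, ∀ y ∈ C, ⟪A x - A y, x - y⟫ ≥ -γ * ‖A x - A y‖ ^ 2 + r * ‖x - y‖ ^ 2)
    (hlip : ∀ x ∈ C, ∀ y ∈ C, ‖A x - A y‖ ≤ μ * ‖x - y‖) :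
    ∃! u : H, u ∈ C ∧ ∀ v ∈ C, ⟪A u, v - u⟫ ≥ 0 := by
  set k : ℝ := r - γ * μ ^ 2 with hk
  have hk0 : 0 < k := by rw [hk]; linarith
  have hμ2 : (0:ℝ) < μ ^ 2 := by positivity
  -- strong monotonicity
  have hmono : ∀ x ∈ C, ∀ y ∈ C, k * ‖x - y‖ ^ 2 ≤ ⟪A x - A y, x - y⟫ := by
    intro x hx y hy
    have h1 := hcoco x hx y hy
    have h2 : ‖A x - A y‖ ^ 2 ≤ (μ * ‖x - y‖) ^ 2 :=
      pow_le_pow_left₀ (norm_nonneg _) (hlip x hx y hy) 2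
    nlinarith [norm_nonneg (A x - A y), norm_nonneg (x - y)]
  -- uniqueness
  have huniq : ∀ u₁, (u₁ ∈ C ∧ ∀ v ∈ C, ⟪A u₁, v - u₁⟫ ≥ 0) →
      ∀ u₂, (u₂ ∈ C ∧ ∀ v ∈ C, ⟪A u₂, v - u₂⟫ ≥ 0) → u₁ = u₂ := by
    rintro u₁ ⟨h₁, hv₁⟩ u₂ ⟨h₂, hv₂⟩
    have e₁ := hv₁ u₂ h₂
    have e₂ := hv₂ u₁ h₁
    have hm := hmono u₁ h₁ u₂ h₂
    have hi : ⟪A u₁ - A u₂, u₁ - u₂⟫ = -⟪A u₁, u₂ - u₁⟫ - ⟪A u₂, u₁ - u₂⟫ := by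
      rw [inner_sub_left, show u₁ - u₂ = -(u₂ - u₁) by abel, inner_neg_right, inner_neg_right]
      try ring
    have hsq : ‖u₁ - u₂‖ ^ 2 ≤ 0 := by nlinarith
    have : ‖u₁ - u₂‖ = 0 := by nlinarith [norm_nonneg (u₁ - u₂)]
    have := sub_eq_zero.mp (norm_eq_zero.mp this)
    exact this
  -- projection onto C
  have hcomp : IsComplete C := hCc.isComplete
  have hproj : ∀ z : H, ∃ w, w ∈ C ∧ ∀ v ∈ C, ⟪z - w, v - w⟫ ≤ 0 := by
    intro z
    obtain ⟨w, hw, hmin⟩ := exists_norm_eq_iInf_of_complete_convex hC hcomp hCconv z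
    exact ⟨w, hw, (norm_eq_iInf_iff_real_inner_le_zero hCconv hw).mp hmin⟩
  choose P hPmem hPle using hproj
  have hPnonexp : ∀ a b : H, ‖P a - P b‖ ≤ ‖a - b‖ := by
    intro a b
    have h1 := hPle a (P b) (hPmem b)
    have h2 := hPle b (P a) (hPmem a)
    have h1' : 0 ≤ ⟪a - P a, P a - P b⟫ := by
      rw [show P b - P a = -(P a - P b) by abel, inner_neg_right] at h1; linarith
    have h2' : 0 ≤ ⟪P b - b, P a - P b⟫ := by
      rw [show b - P b = -(P b - b) by abel, inner_neg_left] at h2; linarith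
    have expand : ⟪a - b, P a - P b⟫ =
        ⟪a - P a, P a - P b⟫ + ⟪P a - P b, P a - P b⟫ + ⟪P b - b, P a - P b⟫ := by
      rw [← inner_add_left, ← inner_add_left]
      congr 1; abel
    have key : ‖P a - P b‖ ^ 2 ≤ ⟪a - b, P a - P b⟫ := by
      rw [expand, real_inner_self_eq_norm_sq]; linarith
    have hcs := real_inner_le_norm (a - b) (P a - P b)
    nlinarith [norm_nonneg (P a - P b), norm_nonneg (a - b)]
  -- the contraction map
  set ρ : ℝ := k / μ ^ 2 with hρ
  have hρ0 : 0 < ρ := by positivity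
  set Fm : H → H := fun x => x - ρ • A x with hFm
  set c : ℝ := 1 - k ^ 2 / μ ^ 2 with hc
  have hFsq : ∀ x ∈ C, ∀ y ∈ C, ‖Fm x - Fm y‖ ^ 2 ≤ c * ‖x - y‖ ^ 2 := by
    intro x hx y hy
    have hsub : Fm x - Fm y = (x - y) - ρ • (A x - A y) := by
      simp only [hFm, smul_sub]; abel
    have hexp : ‖Fm x - Fm y‖ ^ 2 =
        ‖x - y‖ ^ 2 - 2 * (ρ * ⟪A x - A y, x - y⟫) + ρ ^ 2 * ‖A x - A y‖ ^ 2 := by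
      rw [hsub, @norm_sub_sq_real, real_inner_smul_right, norm_smul, Real.norm_eq_abs,
        abs_of_pos hρ0, mul_pow, real_inner_comm]
      try ring
    have hm := hmono x hx y hy
    have h2 : ‖A x - A y‖ ^ 2 ≤ μ ^ 2 * ‖x - y‖ ^ 2 := by
      have := pow_le_pow_left₀ (norm_nonneg _) (hlip x hx y hy) 2
      calc ‖A x - A y‖ ^ 2 ≤ (μ * ‖x - y‖) ^ 2 := this
        _ = μ ^ 2 * ‖x - y‖ ^ 2 := by ring
    have hρμ : ρ ^ 2 * μ ^ 2 = k ^ 2 / μ ^ 2 := by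
      rw [hρ]; field_simp
    have hρk : 2 * (ρ * k) = 2 * (k ^ 2 / μ ^ 2) := by rw [hρ]; field_simp
    have e1 : ρ ^ 2 * ‖A x - A y‖ ^ 2 ≤ (k ^ 2 / μ ^ 2) * ‖x - y‖ ^ 2 := by
      calc ρ ^ 2 * ‖A x - A y‖ ^ 2 ≤ ρ ^ 2 * (μ ^ 2 * ‖x - y‖ ^ 2) :=
            mul_le_mul_of_nonneg_left h2 (sq_nonneg ρ)
        _ = ρ ^ 2 * μ ^ 2 * ‖x - y‖ ^ 2 := by ring
        _ = (k ^ 2 / μ ^ 2) * ‖x - y‖ ^ 2 := by rw [hρμ]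
    have e2 : 2 * (k ^ 2 / μ ^ 2) * ‖x - y‖ ^ 2 ≤ 2 * (ρ * ⟪A x - A y, x - y⟫) := by
      have h3 : ρ * (k * ‖x - y‖ ^ 2) ≤ ρ * ⟪A x - A y, x - y⟫ :=
        mul_le_mul_of_nonneg_left hm (le_of_lt hρ0)
      calc 2 * (k ^ 2 / μ ^ 2) * ‖x - y‖ ^ 2 = 2 * (ρ * k) * ‖x - y‖ ^ 2 := by rw [hρk]
        _ = 2 * (ρ * (k * ‖x - y‖ ^ 2)) := by ring
        _ ≤ 2 * (ρ * ⟪A x - A y, x - y⟫) := by linarith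
    rw [hexp, hc]
    linarith
  set K : NNReal := ⟨Real.sqrt (max 0 c), Real.sqrt_nonneg _⟩ with hKdef
  have hKcoe : (K : ℝ) = Real.sqrt (max 0 c) := rfl
  have hK1 : (K : ℝ) < 1 := by
    rw [hKcoe, show (1:ℝ) = Real.sqrt 1 by simp]
    apply Real.sqrt_lt_sqrt (le_max_left 0 c)
    apply max_lt one_pos
    rw [hc]
    have : 0 < k ^ 2 / μ ^ 2 := by positivity
    linarith
  have hFlip : ∀ x ∈ C, ∀ y ∈ C, ‖Fm x - Fm y‖ ≤ (K : ℝ) * ‖x - y‖ := by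
    intro x hx y hy
    have h1 : ‖Fm x - Fm y‖ ^ 2 ≤ max 0 c * ‖x - y‖ ^ 2 :=
      le_trans (hFsq x hx y hy)
        (mul_le_mul_of_nonneg_right (le_max_right 0 c) (sq_nonneg _))
    have := Real.sqrt_le_sqrt h1
    rwa [Real.sqrt_sq (norm_nonneg _),
      Real.sqrt_mul (le_max_left 0 c), Real.sqrt_sq (norm_nonneg _)] at this
  set T : H → H := fun x => P (Fm x) with hT
  have hmaps : Set.MapsTo T C C := fun x _ => hPmem _
  have hcontr : ContractingWith K (hmaps.restrict T C C) := by
    constructor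
    · exact_mod_cast hK1
    · apply LipschitzWith.of_dist_le_mul
      rintro ⟨x, hx⟩ ⟨y, hy⟩
      simp only [Subtype.dist_eq, Set.MapsTo.restrict, Subtype.map, dist_eq_norm]
      calc ‖T x - T y‖ ≤ ‖Fm x - Fm y‖ := hPnonexp _ _
        _ ≤ (K : ℝ) * ‖x - y‖ := hFlip x hx y hy
  obtain ⟨x₀, hx₀⟩ := hC
  obtain ⟨u, huC, hufix, -, -⟩ :=
    hcontr.exists_fixedPoint' hcomp hmaps hx₀ (edist_ne_top _ _)
  have hVI : ∀ v ∈ C, ⟪A u, v - u⟫ ≥ 0 := by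
    intro v hv
    have hfix : P (Fm u) = u := hufix
    have := hPle (Fm u) v hv
    rw [hfix] at this
    have heq : Fm u - u = -(ρ • A u) := by simp [hFm]
    rw [heq, inner_neg_left, real_inner_smul_left] at this
    have : 0 ≤ ρ * ⟪A u, v - u⟫ := by linarith
    exact nonneg_of_mul_nonneg_right this hρ0
  exact ⟨u, ⟨huC, hVI⟩, fun y hy => huniq y hy u ⟨huC, hVI⟩⟩
end

section
/- Let C be a nonempty closed convex subset of a Hilbert space H, let T : C → C be a contraction with constant k < 1, and let u ∈ C be its unique fixed point. For arbitrary x₀ ∈ C define x_{n+1} = (1 − a_n)x_n + a_n T(x_n), where a_n ∈ [0, 1] and Σ a_n = ∞. Then x_n → u. -/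
open RealInnerProductSpace Filter

theorem stmt_11 {H : Type*} [NormedAddCommGroup H] [InnerProductSpace ℝ H]
    (C : Set H) (hC : C.Nonempty) (hCc : IsClosed C) (hCconv : Convex ℝ C)
    (T : H → H) (hTC : ∀ x ∈ C, T x ∈ C) (k : ℝ) (hk0 : 0 ≤ k) (hk1 : k < 1)
    (hT : ∀ x ∈ C, ∀ y ∈ C, ‖T x - T y‖ ≤ k * ‖x - y‖)
    (u : H) (hu : u ∈ C) (hfix : T u = u)
    (a : ℕ → ℝ) (ha : ∀ n, a n ∈ Set.Icc (0 : ℝ) 1)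
    (hsum : Tendsto (fun N => ∑ n ∈ Finset.range N, a n) atTop atTop)
    (x : ℕ → H) (hx0 : x 0 ∈ C)
    (hrec : ∀ n, x (n + 1) = (1 - a n) • x n + a n • T (x n)) :
    Tendsto x atTop (nhds u) := by
  have hxC : ∀ n, x n ∈ C := by
    intro n
    induction n with
    | zero => exact hx0
    | succ n ih =>
      rw [hrec]
      exact hCconv ih (hTC _ ih) (by linarith [(ha n).2]) (ha n).1 (by ring)
  have key : ∀ n, ‖x (n+1) - u‖ ≤ (1 - a n * (1-k)) * ‖x n - u‖ := by
    intro n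
    have h1 : x (n+1) - u = (1 - a n) • (x n - u) + a n • (T (x n) - u) := by
      rw [hrec]; module
    have hTb : ‖T (x n) - u‖ ≤ k * ‖x n - u‖ := by
      have := hT (x n) (hxC n) u hu
      rwa [hfix] at this
    have h2 : ‖x (n+1) - u‖ ≤ (1 - a n) * ‖x n - u‖ + a n * ‖T (x n) - u‖ := by
      rw [h1]
      refine (norm_add_le _ _).trans ?_
      rw [norm_smul, norm_smul, Real.norm_eq_abs, Real.norm_eq_abs,
        abs_of_nonneg (by linarith [(ha n).2] : (0:ℝ) ≤ 1 - a n),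
        abs_of_nonneg (ha n).1]
    nlinarith [(ha n).1, norm_nonneg (x n - u)]
  have hexp : ∀ n, ‖x n - u‖ ≤ Real.exp (-(1-k) * ∑ i ∈ Finset.range n, a i) * ‖x 0 - u‖ := by
    intro n
    induction n with
    | zero => simp
    | succ n ih =>
      have hc : (1 - a n * (1-k)) ≤ Real.exp (-(1-k) * a n) := by
        have := Real.add_one_le_exp (-(1-k) * a n)
        linarith
      calc ‖x (n+1) - u‖ ≤ (1 - a n * (1-k)) * ‖x n - u‖ := key n
        _ ≤ Real.exp (-(1-k) * a n) * ‖x n - u‖ :=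
            mul_le_mul_of_nonneg_right hc (norm_nonneg _)
        _ ≤ Real.exp (-(1-k) * a n) * (Real.exp (-(1-k) * ∑ i ∈ Finset.range n, a i) * ‖x 0 - u‖) :=
            mul_le_mul_of_nonneg_left ih (Real.exp_pos _).le
        _ = Real.exp (-(1-k) * ∑ i ∈ Finset.range (n+1), a i) * ‖x 0 - u‖ := by
            rw [← mul_assoc, ← Real.exp_add, Finset.sum_range_succ]; ring_nf
  have hten : Tendsto (fun n => Real.exp (-(1-k) * ∑ i ∈ Finset.range n, a i) * ‖x 0 - u‖)
      atTop (nhds 0) := by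
    have h2 : Tendsto (fun n => Real.exp (-(1-k) * ∑ i ∈ Finset.range n, a i)) atTop (nhds 0) := by
      apply Real.tendsto_exp_atBot.comp
      have h1 : Tendsto (fun n => (1-k) * ∑ i ∈ Finset.range n, a i) atTop atTop :=
        (tendsto_const_mul_atTop_of_pos (by linarith)).mpr hsum
      have := tendsto_neg_atTop_atBot.comp h1
      refine this.congr fun n => ?_
      simp [Function.comp]; ring
    simpa using h2.mul_const ‖x 0 - u‖
  rw [tendsto_iff_norm_sub_tendsto_zero]
  exact squeeze_zero (fun n => norm_nonneg _) hexp hten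
end

section
/- Let C be a nonempty closed convex subset of a Hilbert space H, let A : C → H be relaxed (γ, r)-cocoercive and μ-Lipschitz with r > γμ² and μ > 0, and let T : C → C be nonexpansive with at least one fixed point. Then the set Fix(T) ∩ VI(C, A) is either empty or a singleton. -/
open RealInnerProductSpace

theorem stmt_13 {H : Type*} [NormedAddCommGroup H] [InnerProductSpace ℝ H]
    (C : Set H) (hC : C.Nonempty) (hCc : IsClosed C) (hCconv : Convex ℝ C)
    (A : H → H) (γ r μ : ℝ)
    (hγ : 0 < γ) (hr : 0 < r) (hμ : 0 < μ) (hrγμ : r > γ * μ ^ 2)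
    (hcoco : ∀ x ∈ C, ∀ y ∈ C, ⟪A x - A y, x - y⟫ ≥ -γ * ‖A x - A y‖ ^ 2 + r * ‖x - y‖ ^ 2)
    (hlip : ∀ x ∈ C, ∀ y ∈ C, ‖A x - A y‖ ≤ μ * ‖x - y‖)
    (T : H → H) (hTC : ∀ x ∈ C, T x ∈ C)
    (hT : ∀ x ∈ C, ∀ y ∈ C, ‖T x - T y‖ ≤ ‖x - y‖)
    (hfix : ∃ x ∈ C, T x = x) :
    {x ∈ C | T x = x ∧ ∀ v ∈ C, ⟪A x, v - x⟫ ≥ 0}.Subsingleton := by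
  rintro x ⟨hxC, -, hxVI⟩ y ⟨hyC, -, hyVI⟩
  have h1 := hxVI y hyC
  have h2 := hyVI x hxC
  have hmono : ⟪A x - A y, x - y⟫ ≤ 0 := by
    have : ⟪A x - A y, x - y⟫ = -⟪A x, y - x⟫ - ⟪A y, x - y⟫ := by
      simp [inner_sub_left, inner_sub_right]; ring
    rw [this]; linarith
  have hL := hlip x hxC y hyC
  have hLsq : ‖A x - A y‖ ^ 2 ≤ μ ^ 2 * ‖x - y‖ ^ 2 := by
    have := mul_self_le_mul_self (norm_nonneg _) hL
    nlinarith [norm_nonneg (A x - A y), norm_nonneg (x - y)]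
  have hco := hcoco x hxC y hyC
  have key : (r - γ * μ ^ 2) * ‖x - y‖ ^ 2 ≤ 0 := by nlinarith
  have : ‖x - y‖ ^ 2 ≤ 0 := by
    nlinarith [sq_nonneg ‖x - y‖]
  have hz : ‖x - y‖ = 0 := le_antisymm (by nlinarith [norm_nonneg (x - y)]) (norm_nonneg _)
  exact sub_eq_zero.mp (norm_eq_zero.mp hz)
end

section
/- Let C be a nonempty closed convex subset of a Hilbert space H and A : C → H relaxed (γ, r)-cocoercive and μ-Lipschitz with μ > 0 and r > γμ². Fix 0 < s < 2(r − γμ²)/μ² and define x_{n+1} = P_C(x_n − sAx_n) from any x₀ ∈ C. Then (x_n) converges to the unique solution of VI(C, A), with geometric rate ‖x_n − u‖ ≤ k^n ‖x₀ − u‖ where k = √(1 − sμ²(2(r − γμ²)/μ² − s)) < 1. -/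
open RealInnerProductSpace Filter

set_option maxHeartbeats 1000000 in
theorem stmt_17 {H : Type*} [NormedAddCommGroup H] [InnerProductSpace ℝ H]
    (C : Set H) (hC : C.Nonempty) (hCc : IsClosed C) (hCconv : Convex ℝ C)
    (P : H → H) (hP : ∀ x : H, P x ∈ C ∧ ∀ y ∈ C, ‖x - P x‖ ≤ ‖x - y‖)
    (A : H → H) (γ r μ : ℝ)
    (hγ : 0 < γ) (hr : 0 < r) (hμ : 0 < μ) (hrγμ : r > γ * μ ^ 2)
    (hcoco : ∀ x ∈ C, ∀ y ∈ C, ⟪A x - A y, x - y⟫ ≥ -γ * ‖A x - A y‖ ^ 2 + r * ‖x - y‖ ^ 2)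
    (hlip : ∀ x ∈ C, ∀ y ∈ C, ‖A x - A y‖ ≤ μ * ‖x - y‖)
    (s : ℝ) (hs0 : 0 < s) (hs1 : s < 2 * (r - γ * μ ^ 2) / μ ^ 2)
    (u : H) (hu : u ∈ C) (huVI : ∀ v ∈ C, ⟪A u, v - u⟫ ≥ 0)
    (x : ℕ → H) (hx0 : x 0 ∈ C)
    (hrec : ∀ n, x (n + 1) = P (x n - s • A (x n))) :
    Tendsto x atTop (nhds u) ∧
      ∀ n : ℕ,
        ‖x n - u‖ ≤
          (Real.sqrt (1 - s * μ ^ 2 * (2 * (r - γ * μ ^ 2) / μ ^ 2 - s))) ^ n * ‖x 0 - u‖ := by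
  have hμ2 : (0:ℝ) < μ ^ 2 := by positivity
  set k2 : ℝ := 1 - s * μ ^ 2 * (2 * (r - γ * μ ^ 2) / μ ^ 2 - s) with hk2def
  have hk2eq : k2 = 1 - 2*s*(r - γ*μ^2) + s^2*μ^2 := by
    rw [hk2def]; field_simp; ring
  set k : ℝ := Real.sqrt k2 with hkdef
  have hk0 : 0 ≤ k := Real.sqrt_nonneg _
  have hslt : s * μ ^ 2 < 2 * (r - γ * μ ^ 2) := (lt_div_iff₀ hμ2).mp hs1
  have hk2lt : k2 < 1 := by
    rw [hk2eq]
    nlinarith [mul_pos hs0 (sub_pos.mpr hslt)]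
  have hk1 : k < 1 := (Real.sqrt_lt' one_pos).mpr (by nlinarith)
  -- projection characterization
  have hproj : ∀ z : H, ∀ y ∈ C, ⟪z - P z, y - P z⟫ ≤ 0 := by
    intro z y hy
    haveI : Nonempty ↑C := hC.to_subtype
    have hbdd : BddBelow (Set.range fun w : C => ‖z - w‖) :=
      ⟨0, by rintro _ ⟨w, rfl⟩; positivity⟩
    have hmin : ‖z - P z‖ = ⨅ w : C, ‖z - w‖ := by
      refine le_antisymm (le_ciInf fun w => (hP z).2 w w.2) ?_
      exact ciInf_le hbdd ⟨P z, (hP z).1⟩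
    exact (norm_eq_iInf_iff_real_inner_le_zero hCconv (hP z).1).mp hmin y hy
  have hxC : ∀ n, x n ∈ C := by
    intro n
    induction n with
    | zero => exact hx0
    | succ n ih => rw [hrec]; exact (hP _).1
  have hstep : ∀ n, ‖x (n+1) - u‖ ≤ k * ‖x n - u‖ := by
    intro n
    have haC := hxC n
    rw [hrec n]
    set a := x n with ha
    set w := a - s • A a with hwdef
    set p := P w with hpdef
    have hpC : p ∈ C := (hP w).1
    have h1 : ⟪w - p, u - p⟫ ≤ 0 := hproj w u hu
    have h2 : (0:ℝ) ≤ ⟪A u, p - u⟫ := huVI p hpC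
    have e1 : ‖p - u‖^2 = ⟪p - w, p - u⟫ + ⟪w - u, p - u⟫ := by
      rw [← inner_add_left, show p - w + (w - u) = p - u by abel,
        real_inner_self_eq_norm_sq]
    have e2 : ⟪p - w, p - u⟫ = ⟪w - p, u - p⟫ := by
      rw [show p - w = -(w - p) by abel, show p - u = -(u - p) by abel,
        inner_neg_neg]
    have e3 : w - u + s • A u = (a - u) - s • (A a - A u) := by
      rw [hwdef, smul_sub]; abel
    have key : ‖p - u‖^2 ≤ ‖(a - u) - s • (A a - A u)‖ * ‖p - u‖ := by
      have c1 : ‖p - u‖^2 ≤ ⟪w - u, p - u⟫ + s * ⟪A u, p - u⟫ := by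
        rw [e1, e2]
        nlinarith [h1, h2, hs0]
      have c2 : ⟪w - u, p - u⟫ + s * ⟪A u, p - u⟫
          = ⟪(a - u) - s • (A a - A u), p - u⟫ := by
        rw [← e3, inner_add_left, real_inner_smul_left]
      calc ‖p - u‖^2 ≤ ⟪(a - u) - s • (A a - A u), p - u⟫ := by rw [← c2]; exact c1
        _ ≤ ‖(a - u) - s • (A a - A u)‖ * ‖p - u‖ := real_inner_le_norm _ _
    have hpu : ‖p - u‖ ≤ ‖(a - u) - s • (A a - A u)‖ := by
      nlinarith [key, norm_nonneg (p - u), norm_nonneg ((a - u) - s • (A a - A u))]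
    have hL : ‖A a - A u‖ ≤ μ * ‖a - u‖ := hlip a haC u hu
    have hCo := hcoco a haC u hu
    have h1sq : ‖A a - A u‖^2 ≤ μ^2 * ‖a - u‖^2 := by
      nlinarith [hL, norm_nonneg (A a - A u), norm_nonneg (a - u), hμ.le]
    have hb : ‖(a - u) - s • (A a - A u)‖^2 ≤ k2 * ‖a - u‖^2 := by
      have expand : ‖(a - u) - s • (A a - A u)‖^2
          = ‖a - u‖^2 - 2*s*⟪A a - A u, a - u⟫ + s^2*‖A a - A u‖^2 := by
        rw [norm_sub_sq_real, real_inner_smul_right, norm_smul,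
          real_inner_comm, Real.norm_eq_abs, abs_of_pos hs0, mul_pow]
        ring
      rw [expand, hk2eq]
      nlinarith [hCo, h1sq, hs0, hγ,
        mul_le_mul_of_nonneg_left h1sq (by positivity : (0:ℝ) ≤ 2*s*γ + s^2),
        mul_le_mul_of_nonneg_left hCo (by positivity : (0:ℝ) ≤ 2*s)]
    calc ‖p - u‖ ≤ ‖(a - u) - s • (A a - A u)‖ := hpu
      _ = Real.sqrt (‖(a - u) - s • (A a - A u)‖^2) := (Real.sqrt_sq (norm_nonneg _)).symm
      _ ≤ Real.sqrt (k2 * ‖a - u‖^2) := Real.sqrt_le_sqrt hb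
      _ = k * ‖a - u‖ := by
          rw [Real.sqrt_mul' _ (sq_nonneg _), Real.sqrt_sq (norm_nonneg _)]
  have hgeo : ∀ n, ‖x n - u‖ ≤ k ^ n * ‖x 0 - u‖ := by
    intro n
    induction n with
    | zero => simp
    | succ n ih =>
      calc ‖x (n+1) - u‖ ≤ k * ‖x n - u‖ := hstep n
        _ ≤ k * (k ^ n * ‖x 0 - u‖) := mul_le_mul_of_nonneg_left ih hk0
        _ = k ^ (n+1) * ‖x 0 - u‖ := by ring
  refine ⟨?_, hgeo⟩
  rw [tendsto_iff_norm_sub_tendsto_zero]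
  have h0 : Tendsto (fun n => k ^ n * ‖x 0 - u‖) atTop (nhds 0) := by
    simpa using (tendsto_pow_atTop_nhds_zero_of_lt_one hk0 hk1).mul_const ‖x 0 - u‖
  exact squeeze_zero (fun n => norm_nonneg _) hgeo h0
end
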